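/- The interpolation scheme built on Monaghan's M'₄ kernel reproduces polynomials of degree at most two: for every polynomial q : ℝ → ℝ of degree ≤ 2 and every x ∈ ℝ, Σ_{k∈ℤ} q(k) · M'₄(x − k) = q(x). -/
import Mathlib

/-- Monaghan's `M'₄` interpolating kernel. -/
noncomputable def M4 (y : ℝ) : ℝ :=
  if |y| ≤ 1 then 1 - 5 / 2 * |y| ^ 2 + 3 / 2 * |y| ^ 3
  else if |y| ≤ 2 then 1 / 2 * (2 - |y|) ^ 2 * (1 - |y|)
  else 0

lemma M4_out {y : ℝ} (h : 2 ≤ |y|) : M4 y = 0 := by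
  unfold M4
  split_ifs with h1 h2
  · linarith
  · have : |y| = 2 := le_antisymm h2 h
    rw [this]; ring
  · rfl

lemma M4_in {y : ℝ} (h : |y| ≤ 1) :
    M4 y = 1 - 5 / 2 * |y| ^ 2 + 3 / 2 * |y| ^ 3 := if_pos h

lemma M4_mid {y : ℝ} (h1 : 1 ≤ |y|) (h2 : |y| ≤ 2) :
    M4 y = 1 / 2 * (2 - |y|) ^ 2 * (1 - |y|) := by
  unfold M4
  split_ifs with ha
  · have : |y| = 1 := le_antisymm ha h1
    rw [this]; ring
  · rfl

/-- the interpolation scheme built on Monaghan's `M'₄` kernel reproduces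
polynomials of degree at most two: for every polynomial `q` with `deg q ≤ 2` and every
`x ∈ ℝ`, `Σ_{k∈ℤ} q(k) M'₄(x − k) = q(x)`. -/
theorem M4_reproduces_quadratics
    (q : Polynomial ℝ) (hq : q.degree ≤ 2) (x : ℝ) :
    ∑' k : ℤ, q.eval (k : ℝ) * M4 (x - (k : ℝ)) = q.eval x := by
  set n := ⌊x⌋ with hn
  have ht0 : (0:ℝ) ≤ x - n := sub_nonneg.2 (Int.floor_le x)
  have ht1 : x - (n:ℝ) < 1 := by
    have := Int.lt_floor_add_one x; linarith
  set t := x - (n:ℝ) with htdef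
  have hsupp : ∀ k ∉ ({n-1, n, n+1, n+2} : Finset ℤ),
      q.eval (k : ℝ) * M4 (x - (k : ℝ)) = 0 := by
    intro k hk
    simp only [Finset.mem_insert, Finset.mem_singleton] at hk
    push_neg at hk
    have hk' : k ≤ n - 2 ∨ n + 3 ≤ k := by omega
    have h2 : 2 ≤ |x - (k:ℝ)| := by
      rcases hk' with h | h
      · have : (k:ℝ) ≤ (n:ℝ) - 2 := by exact_mod_cast h
        rw [le_abs]; left; linarith
      · have : (n:ℝ) + 3 ≤ (k:ℝ) := by exact_mod_cast h
        rw [le_abs]; right; linarith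
    rw [M4_out h2, mul_zero]
  rw [tsum_eq_sum hsupp]
  have hnat : q.natDegree < 3 := by
    have : q.natDegree ≤ 2 := Polynomial.natDegree_le_iff_degree_le.2 hq
    omega
  have heval : ∀ y : ℝ, q.eval y = q.coeff 0 + q.coeff 1 * y + q.coeff 2 * y ^ 2 := by
    intro y
    rw [Polynomial.eval_eq_sum_range' hnat]
    simp [Finset.sum_range_succ]
  have e1 : M4 (x - ((n:ℝ) - 1)) = -(t * (1 - t) ^ 2) / 2 := by
    have hy : x - ((n:ℝ) - 1) = t + 1 := by rw [htdef]; ring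
    have habs : |t + 1| = t + 1 := abs_of_nonneg (by linarith)
    rw [hy, M4_mid (by rw [habs]; linarith) (by rw [habs]; linarith), habs]
    ring
  have e2 : M4 (x - (n:ℝ)) = 1 - 5 / 2 * t ^ 2 + 3 / 2 * t ^ 3 := by
    have habs : |t| = t := abs_of_nonneg ht0
    rw [← htdef, M4_in (by rw [habs]; linarith), habs]
  have e3 : M4 (x - ((n:ℝ) + 1)) = 1 - 5 / 2 * (1 - t) ^ 2 + 3 / 2 * (1 - t) ^ 3 := by
    have hy : x - ((n:ℝ) + 1) = t - 1 := by rw [htdef]; ring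
    have habs : |t - 1| = 1 - t := by rw [abs_of_nonpos (by linarith)]; ring
    rw [hy, M4_in (by rw [habs]; linarith), habs]
  have e4 : M4 (x - ((n:ℝ) + 2)) = 1 / 2 * t ^ 2 * (t - 1) := by
    have hy : x - ((n:ℝ) + 2) = t - 2 := by rw [htdef]; ring
    have habs : |t - 2| = 2 - t := by rw [abs_of_nonpos (by linarith)]; ring
    rw [hy, M4_mid (by rw [habs]; linarith) (by rw [habs]; linarith), habs]
    ring
  have hx : x = (n:ℝ) + t := by rw [htdef]; ring
  rw [show ({n-1, n, n+1, n+2} : Finset ℤ) = {n-1, n, n+1, n+2} from rfl]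
  rw [Finset.sum_insert (by simp only [Finset.mem_insert, Finset.mem_singleton, not_or]; omega), Finset.sum_insert (by simp only [Finset.mem_insert, Finset.mem_singleton, not_or]; omega),
    Finset.sum_insert (by simp only [Finset.mem_insert, Finset.mem_singleton, not_or]; omega), Finset.sum_singleton]
  push_cast
  rw [e1, e2, e3, e4, heval, heval, heval, heval, heval, hx]
  ring
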